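/- arXiv:1111.3454 — 3 statements merged into one kernel-verified Lean document; each statement's English description precedes it below -/
import Mathlib

section
/- Let $n \geq 3$ and let $Y_1, \dots, Y_n$ be independent exponential random variables with rate 1. Set $R = \max_{1 \le i \le n} Y_i / \log n$. Then $\mathbb{E}(e^R) \le \exp(1 + 1/(\log n - 1))$. -/
open MeasureTheory ProbabilityTheory Real Set
open scoped ENNReal

set_option maxHeartbeats 1000000 in
theorem stmt_2 {Ω : Type*} [MeasurableSpace Ω] (μ : Measure Ω) [IsProbabilityMeasure μ]
    (n : ℕ) (hn : 3 ≤ n) (Y : Fin n → Ω → ℝ)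
    (hmeas : ∀ i, Measurable (Y i))
    (hindep : iIndepFun Y μ)
    (hexp : ∀ i, ∀ s : ℝ, 0 ≤ s → μ {ω | s ≤ Y i ω} = ENNReal.ofReal (Real.exp (-s)))
    (R : Ω → ℝ) (hR : ∀ ω, R ω = (⨆ i, Y i ω) / Real.log n) :
    ∫ ω, Real.exp (R ω) ∂μ ≤ Real.exp (1 + 1 / (Real.log n - 1)) := by
  set L := Real.log n with hLdef
  have hn0 : (0:ℝ) < n := by positivity
  have hL : 1 < L := by
    have h3 : Real.log 3 ≤ L := by
      apply Real.log_le_log (by norm_num)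
      exact_mod_cast hn
    have : 1 < Real.log 3 := by
      rw [Real.lt_log_iff_exp_lt (by norm_num)]
      calc Real.exp 1 < 2.7182818286 := Real.exp_one_lt_d9
        _ < 3 := by norm_num
    linarith
  have hL0 : 0 < L := by linarith
  have hNe : Nonempty (Fin n) := ⟨⟨0, by omega⟩⟩
  -- R is measurable
  have hRm : Measurable R := by
    have : Measurable fun ω => (⨆ i, Y i ω) / L :=
      (Measurable.iSup hmeas).div_const L
    convert this using 1
    funext ω; exact hR ω
  have hfm : Measurable fun ω => Real.exp (R ω) := hRm.exp
  -- tail bound for t ≥ 1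
  have tail : ∀ t : ℝ, 1 ≤ t →
      μ {ω | t ≤ Real.exp (R ω)} ≤ (n : ℝ≥0∞) * ENNReal.ofReal (t ^ (-L)) := by
    intro t ht
    have ht0 : (0:ℝ) < t := by linarith
    have hlt : 0 ≤ Real.log t := Real.log_nonneg ht
    have hsub : {ω | t ≤ Real.exp (R ω)} ⊆ ⋃ i, {ω | L * Real.log t ≤ Y i ω} := by
      intro ω hω
      have h1 : Real.log t ≤ R ω := by
        have := Real.log_le_log ht0 hω
        rwa [Real.log_exp] at this
      rw [hR ω] at h1
      have h2 : L * Real.log t ≤ ⨆ i, Y i ω := by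
        have := (le_div_iff₀ hL0).mp h1
        linarith [this]
      obtain ⟨i, hi⟩ := exists_eq_ciSup_of_finite (f := fun i => Y i ω)
      exact Set.mem_iUnion.mpr ⟨i, by simpa [hi] using h2⟩
    calc μ {ω | t ≤ Real.exp (R ω)} ≤ μ (⋃ i, {ω | L * Real.log t ≤ Y i ω}) :=
          measure_mono hsub
      _ ≤ ∑ i : Fin n, μ {ω | L * Real.log t ≤ Y i ω} := measure_iUnion_fintype_le _ _
      _ = ∑ i : Fin n, ENNReal.ofReal (Real.exp (-(L * Real.log t))) := by
          refine Finset.sum_congr rfl fun i _ => ?_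
          exact hexp i _ (by positivity)
      _ = (n : ℝ≥0∞) * ENNReal.ofReal (t ^ (-L)) := by
          rw [Finset.sum_const, Finset.card_univ, Fintype.card_fin, nsmul_eq_mul]
          congr 2
          rw [Real.rpow_def_of_pos ht0]
          ring_nf
  -- layercake bound on the lintegral
  have key : ∫⁻ ω, ENNReal.ofReal (Real.exp (R ω)) ∂μ ≤
      ENNReal.ofReal (Real.exp 1 + Real.exp 1 / (L - 1)) := by
    rw [lintegral_eq_lintegral_meas_le μ
      (Filter.Eventually.of_forall fun ω => (Real.exp_pos _).le) hfm.aemeasurable]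
    have hsplit : Ioi (0:ℝ) = Ioc 0 (Real.exp 1) ∪ Ioi (Real.exp 1) :=
      (Set.Ioc_union_Ioi_eq_Ioi (Real.exp_pos 1).le).symm
    rw [hsplit, lintegral_union measurableSet_Ioi (Set.Ioc_disjoint_Ioi le_rfl)]
    have h1 : ∫⁻ t in Ioc (0:ℝ) (Real.exp 1), μ {a | t ≤ Real.exp (R a)} ≤
        ENNReal.ofReal (Real.exp 1) := by
      calc ∫⁻ t in Ioc (0:ℝ) (Real.exp 1), μ {a | t ≤ Real.exp (R a)}
          ≤ ∫⁻ _ in Ioc (0:ℝ) (Real.exp 1), 1 := by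
            exact lintegral_mono fun t => prob_le_one
        _ = ENNReal.ofReal (Real.exp 1) := by
            rw [lintegral_one, Measure.restrict_apply_univ, Real.volume_Ioc, sub_zero]
    have hInt : IntegrableOn (fun t : ℝ => t ^ (-L)) (Ioi (Real.exp 1)) :=
      integrableOn_Ioi_rpow_of_lt (by linarith) (Real.exp_pos 1)
    have h2 : ∫⁻ t in Ioi (Real.exp 1), μ {a | t ≤ Real.exp (R a)} ≤
        ENNReal.ofReal (Real.exp 1 / (L - 1)) := by
      calc ∫⁻ t in Ioi (Real.exp 1), μ {a | t ≤ Real.exp (R a)}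
          ≤ ∫⁻ t in Ioi (Real.exp 1), (n : ℝ≥0∞) * ENNReal.ofReal (t ^ (-L)) := by
            refine setLIntegral_mono (by measurability) fun t ht => ?_
            refine tail t ?_
            have h1e : (1:ℝ) ≤ Real.exp 1 := by linarith [Real.add_one_le_exp (1:ℝ)]
            exact le_trans h1e (le_of_lt ht)
        _ = (n : ℝ≥0∞) * ∫⁻ t in Ioi (Real.exp 1), ENNReal.ofReal (t ^ (-L)) :=
            lintegral_const_mul _ (by measurability)
        _ = (n : ℝ≥0∞) * ENNReal.ofReal (∫ t in Ioi (Real.exp 1), t ^ (-L)) := by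
            rw [← ofReal_integral_eq_lintegral_ofReal hInt]
            exact Filter.eventually_of_mem (self_mem_ae_restrict measurableSet_Ioi)
              fun t ht => Real.rpow_nonneg (le_of_lt ((Real.exp_pos 1).trans ht)) _
        _ = ENNReal.ofReal (Real.exp 1 / (L - 1)) := by
            have hval : (n:ℝ) * (-Real.exp 1 ^ (-L + 1) / (-L + 1)) =
                Real.exp 1 / (L - 1) := by
              have h1' : L - 1 ≠ 0 := sub_ne_zero_of_ne (ne_of_gt hL)
              have h3' : (n:ℝ) ≠ 0 := ne_of_gt hn0
              have hv : Real.exp (-L + 1) = Real.exp 1 / n := by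
                rw [Real.exp_add, Real.exp_neg, hLdef, Real.exp_log hn0]; ring
              rw [Real.exp_one_rpow, hv]
              have h2' : (-L + 1) ≠ 0 := by intro h; apply h1'; linarith
              field_simp
              ring
            rw [integral_Ioi_rpow_of_lt (by linarith) (Real.exp_pos 1),
              ← ENNReal.ofReal_natCast, ← ENNReal.ofReal_mul (by positivity), hval]
    refine le_trans (add_le_add h1 h2) (le_of_eq ?_)
    rw [← ENNReal.ofReal_add (Real.exp_pos 1).le
      (div_nonneg (Real.exp_pos 1).le (by linarith))]
  -- conclude
  have hint : Integrable (fun ω => Real.exp (R ω)) μ := by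
    refine ⟨hfm.aestronglyMeasurable, ?_⟩
    rw [hasFiniteIntegral_iff_ofReal (Filter.Eventually.of_forall fun ω => (Real.exp_pos _).le)]
    exact lt_of_le_of_lt key ENNReal.ofReal_lt_top
  rw [integral_eq_lintegral_of_nonneg_ae
    (Filter.Eventually.of_forall fun ω => (Real.exp_pos _).le) hfm.aestronglyMeasurable]
  apply ENNReal.toReal_le_of_le_ofReal (Real.exp_pos _).le
  refine le_trans key (ENNReal.ofReal_le_ofReal ?_)
  have hx : 0 ≤ 1 / (L - 1) := div_nonneg zero_le_one (by linarith)
  calc Real.exp 1 + Real.exp 1 / (L - 1)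
      = Real.exp 1 * (1 + 1 / (L - 1)) := by ring
    _ ≤ Real.exp 1 * Real.exp (1 / (L - 1)) := by
        apply mul_le_mul_of_nonneg_left _ (Real.exp_pos 1).le
        linarith [Real.add_one_le_exp (1 / (L - 1))]
    _ = Real.exp (1 + 1 / (L - 1)) := (Real.exp_add _ _).symm
end

section
/- Let $A$ be an $m \times n$ matrix with $m \le n$, all entries $0$ or $1$, such that each row contains at least $k$ ones, where $k \ge m$. Then $\mathrm{perm}(A) \ge k!/(k-m)!$. -/
/-- The permanent of a rectangular `m × n` matrix (`m ≤ n`): the sum over all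
injections `π : Fin m ↪ Fin n` of the products `∏ i, A i (π i)`. -/
noncomputable def rperm {m n : ℕ} (A : Matrix (Fin m) (Fin n) ℝ) : ℝ :=
  ∑ π : Fin m ↪ Fin n, ∏ i, A i (π i)

open Finset

private lemma cons_inj' {α : Type*} {m : ℕ} {a : α} {g : Fin m → α}
    (hg : Function.Injective g) (ha : ∀ i, g i ≠ a) :
    Function.Injective (Fin.cons a g : Fin (m + 1) → α) := by
  intro x y h
  induction x using Fin.cases <;> induction y using Fin.cases <;>
    simp only [Fin.cons_zero, Fin.cons_succ] at h
  · rfl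
  · exact absurd h.symm (ha _)
  · exact absurd h (ha _)
  · exact congrArg Fin.succ (hg h)

private lemma count_lemma {α : Type*} [Fintype α] [DecidableEq α] :
    ∀ (m k : ℕ) (S : Fin m → Finset α), m ≤ k → (∀ i, k ≤ (S i).card) →
    k.descFactorial m ≤
      (univ.filter (fun f : Fin m → α => Function.Injective f ∧ ∀ i, f i ∈ S i)).card := by
  intro m
  induction m with
  | zero =>
    intro k S _ _
    simp only [Nat.descFactorial]
    refine Nat.one_le_iff_ne_zero.mpr (Finset.card_ne_zero_of_mem (a := Fin.elim0) ?_)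
    simp only [mem_filter, mem_univ, true_and]
    exact ⟨fun x => x.elim0, fun i => i.elim0⟩
  | succ m ih =>
    intro k S hmk hS
    obtain ⟨k, rfl⟩ : ∃ k', k = k' + 1 := ⟨k - 1, by omega⟩
    set T := univ.filter
      (fun f : Fin (m + 1) → α => Function.Injective f ∧ ∀ i, f i ∈ S i) with hT
    have hfib : ∀ f ∈ T, f 0 ∈ S 0 := fun f hf => (mem_filter.mp hf).2.2 0
    rw [card_eq_sum_card_fiberwise hfib]
    have key : ∀ a ∈ S 0, k.descFactorial m ≤ (T.filter fun f => f 0 = a).card := by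
      intro a ha
      set S' : Fin m → Finset α := fun i => (S i.succ).erase a with hS'
      have h1 : k.descFactorial m ≤
          (univ.filter (fun g : Fin m → α =>
            Function.Injective g ∧ ∀ i, g i ∈ S' i)).card := by
        refine ih k S' (by omega) (fun i => ?_)
        show k ≤ ((S i.succ).erase a).card
        have := hS i.succ
        have := Finset.pred_card_le_card_erase (s := S i.succ) (a := a)
        omega
      refine h1.trans (Finset.card_le_card_of_injOn (fun g => Fin.cons a g) ?_ ?_)
      · intro g hg
        obtain ⟨hginj, hgmem⟩ := (mem_filter.mp hg).2
        have hne : ∀ i, g i ≠ a := fun i => Finset.ne_of_mem_erase (hgmem i)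
        refine mem_filter.mpr ⟨mem_filter.mpr ⟨mem_univ _, cons_inj' hginj hne, ?_⟩,
          by simp⟩
        intro i
        induction i using Fin.cases with
        | zero => simpa using ha
        | succ j => simpa using Finset.mem_of_mem_erase (hgmem j)
      · intro g _ g' _ h
        funext i
        have := congrFun h i.succ
        simpa using this
    calc (k + 1).descFactorial (m + 1) = (k + 1) * k.descFactorial m := by
          rw [Nat.succ_descFactorial_succ]
      _ ≤ (S 0).card * k.descFactorial m :=
          Nat.mul_le_mul_right _ (hS 0)
      _ = ∑ _a ∈ S 0, k.descFactorial m := by rw [sum_const, smul_eq_mul]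
      _ ≤ ∑ a ∈ S 0, (T.filter fun f => f 0 = a).card := sum_le_sum key

theorem stmt_12 {m n k : ℕ} (hmn : m ≤ n) (hkm : m ≤ k)
    (A : Matrix (Fin m) (Fin n) ℝ)
    (h01 : ∀ i j, A i j = 0 ∨ A i j = 1)
    (hrows : ∀ i : Fin m, k ≤ (Finset.univ.filter (fun j => A i j = 1)).card) :
    (k.factorial : ℝ) / ((k - m).factorial : ℝ) ≤ rperm A := by
  classical
  set S : Fin m → Finset (Fin n) := fun i => univ.filter (fun j => A i j = 1) with hSdef
  have hcount := count_lemma m k S hkm hrows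
  set G : Finset (Fin m ↪ Fin n) :=
    univ.filter (fun π : Fin m ↪ Fin n => ∀ i, A i (π i) = 1) with hG
  -- card equality between embeddings and injective functions
  have hcard : (univ.filter (fun f : Fin m → Fin n =>
      Function.Injective f ∧ ∀ i, f i ∈ S i)).card = G.card := by
    refine Finset.card_bij (fun f hf => ⟨f, (mem_filter.mp hf).2.1⟩) ?_ ?_ ?_
    · intro f hf
      simp only [hG, mem_filter, mem_univ, true_and, Function.Embedding.coeFn_mk]
      intro i
      have := (mem_filter.mp hf).2.2 i
      simpa [hSdef] using this
    · intro f hf f' hf' h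
      exact congrArg (fun e => (e : Fin m ↪ Fin n).toFun) h
    · intro π hπ
      simp only [hG, mem_filter, mem_univ, true_and] at hπ
      refine ⟨π, ?_, by ext i; simp⟩
      simp only [mem_filter, mem_univ, true_and]
      exact ⟨π.injective, fun i => by simpa [hSdef] using hπ i⟩
  -- rperm ≥ G.card
  have hnonneg : ∀ π : Fin m ↪ Fin n, (0:ℝ) ≤ ∏ i, A i (π i) :=
    fun π => Finset.prod_nonneg fun i _ => by rcases h01 i (π i) with h | h <;> simp [h]
  have h2 : (G.card : ℝ) ≤ rperm A := by
    have : (G.card : ℝ) = ∑ π ∈ G, ∏ i, A i (π i) := by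
      rw [Finset.sum_congr rfl (fun π hπ => by
        simp only [hG, mem_filter] at hπ
        exact Finset.prod_eq_one fun i _ => hπ.2 i)]
      simp
    rw [this, rperm]
    exact Finset.sum_le_sum_of_subset_of_nonneg (subset_univ G)
      (fun π _ _ => hnonneg π)
  refine le_trans ?_ h2
  have hfact : ((k - m).factorial * k.descFactorial m : ℕ) = k.factorial :=
    Nat.factorial_mul_descFactorial hkm
  have hpos : (0:ℝ) < ((k - m).factorial : ℝ) := by positivity
  rw [div_le_iff₀ hpos]
  calc (k.factorial : ℝ) = (k.descFactorial m : ℝ) * ((k - m).factorial : ℝ) := by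
        rw [← Nat.cast_mul, mul_comm, hfact]
    _ ≤ (G.card : ℝ) * ((k - m).factorial : ℝ) := by
        apply mul_le_mul_of_nonneg_right _ hpos.le
        exact_mod_cast hcard ▸ hcount
end

section
/- Let $(Y_{i,j})_{1 \le i,j \le n}$, $n \ge 2$, be independent rate-1 exponential random variables, and set $R_i = \max_{1\le j \le n} Y_{i,j} / \log n$. Then for any $\lambda > 0$, $\mathbb{P}\left(\max_{\pi \in S_n} \sum_{i=1}^n Y_{i,\pi(i)} \ge n\log n + n\frac{\log\log n}{\lambda}\right) \le \exp\left(\left(\frac{1}{\log n - 1} - \frac{\log\log n}{\lambda \log n}\right) n\right)$ for all $n \ge 3$. -/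
open MeasureTheory ProbabilityTheory Real

/-- Auxiliary: a nonnegative random variable with tail `μ{x ≤ V} ≤ c e^{-x}` for `x > 0`
has `exp (a⁻¹ * V)` integrable and mgf at `a⁻¹` bounded by `1 + c/(a-1)`, when `a > 1`. -/
lemma mgf_aux {Ω : Type*} [MeasurableSpace Ω] (μ : Measure Ω) [IsProbabilityMeasure μ]
    (V : Ω → ℝ) (hV : Measurable V) (hVnn : ∀ ω, 0 ≤ V ω)
    (a c : ℝ) (ha : 1 < a) (hc : 0 ≤ c)
    (htail : ∀ x : ℝ, 0 < x → μ {ω | x ≤ V ω} ≤ ENNReal.ofReal (c * Real.exp (-x))) :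
    Integrable (fun ω => Real.exp (a⁻¹ * V ω)) μ ∧
      mgf V μ a⁻¹ ≤ 1 + c / (a - 1) := by
  have ha0 : (0:ℝ) < a := by linarith
  set f : Ω → ℝ := fun ω => Real.exp (a⁻¹ * V ω) with hf
  have hfmeas : Measurable f := (hV.const_mul a⁻¹).exp
  have hfnn : ∀ ω, 0 ≤ f ω := fun ω => (Real.exp_pos _).le
  -- layer cake
  have hlc : ∫⁻ ω, ENNReal.ofReal (f ω) ∂μ = ∫⁻ t in Set.Ioi (0:ℝ), μ {ω | t ≤ f ω} :=
    lintegral_eq_lintegral_meas_le μ (Filter.Eventually.of_forall hfnn) hfmeas.aemeasurable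
  -- bound the layer cake integral
  have h2 : ∫⁻ t in Set.Ioi (1:ℝ), μ {ω | t ≤ f ω}
      ≤ ∫⁻ t in Set.Ioi (1:ℝ), ENNReal.ofReal (c * t ^ (-a)) := by
    refine setLIntegral_mono (by fun_prop) ?_
    intro t ht
    have ht1 : (1:ℝ) < t := ht
    have ht0 : (0:ℝ) < t := by linarith
    have hlt : 0 < Real.log t := Real.log_pos ht1
    have hsub : {ω | t ≤ f ω} ⊆ {ω | a * Real.log t ≤ V ω} := by
      intro ω hω
      have : Real.log t ≤ a⁻¹ * V ω := by
        have := (Real.log_le_iff_le_exp ht0).2 hω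
        exact this
      have h' := mul_le_mul_of_nonneg_left this ha0.le
      rw [← mul_assoc, mul_inv_cancel₀ ha0.ne', one_mul] at h'
      exact h'
    calc μ {ω | t ≤ f ω} ≤ μ {ω | a * Real.log t ≤ V ω} := measure_mono hsub
      _ ≤ ENNReal.ofReal (c * Real.exp (-(a * Real.log t))) :=
          htail _ (by positivity)
      _ = ENNReal.ofReal (c * t ^ (-a)) := by
          rw [Real.rpow_def_of_pos ht0]
          ring_nf
  have hint_rpow : IntegrableOn (fun t : ℝ => c * t ^ (-a)) (Set.Ioi (1:ℝ)) :=
    (integrableOn_Ioi_rpow_of_lt (by linarith) one_pos).const_mul c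
  have h2' : ∫⁻ t in Set.Ioi (1:ℝ), ENNReal.ofReal (c * t ^ (-a))
      = ENNReal.ofReal (c / (a - 1)) := by
    rw [← ofReal_integral_eq_lintegral_ofReal hint_rpow
      ((ae_restrict_iff' measurableSet_Ioi).mpr (Filter.Eventually.of_forall
        (fun t ht => by
          have ht0 : (0:ℝ) < t := lt_trans one_pos ht
          positivity)))]
    congr 1
    rw [integral_const_mul, integral_Ioi_rpow_of_lt (by linarith) one_pos]
    rw [Real.one_rpow]
    rw [show -a + 1 = -(a - 1) by ring, div_neg, neg_div, neg_neg, mul_one_div]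
  have h1 : ∫⁻ t in Set.Ioc (0:ℝ) 1, μ {ω | t ≤ f ω} ≤ ENNReal.ofReal 1 := by
    calc ∫⁻ t in Set.Ioc (0:ℝ) 1, μ {ω | t ≤ f ω}
        ≤ ∫⁻ _ in Set.Ioc (0:ℝ) 1, 1 := by
          refine setLIntegral_mono measurable_const fun t _ => prob_le_one
      _ = 1 := by simp [Real.volume_Ioc]
      _ = ENNReal.ofReal 1 := by simp
  have hL : ∫⁻ ω, ENNReal.ofReal (f ω) ∂μ ≤ ENNReal.ofReal (1 + c / (a - 1)) := by
    rw [hlc, ← Set.Ioc_union_Ioi_eq_Ioi (zero_le_one (α := ℝ)),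
      lintegral_union measurableSet_Ioi (Set.Ioc_disjoint_Ioi le_rfl)]
    calc _ ≤ ENNReal.ofReal 1 + ENNReal.ofReal (c / (a - 1)) := by
          exact add_le_add h1 (h2.trans_eq h2')
      _ = ENNReal.ofReal (1 + c / (a - 1)) := by
          rw [← ENNReal.ofReal_add zero_le_one (div_nonneg hc (by linarith))]
  have hfint : Integrable f μ := by
    refine ⟨hfmeas.aestronglyMeasurable, ?_⟩
    rw [hasFiniteIntegral_iff_ofReal (Filter.Eventually.of_forall hfnn)]
    exact hL.trans_lt ENNReal.ofReal_lt_top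
  refine ⟨hfint, ?_⟩
  have : mgf V μ a⁻¹ = (∫⁻ ω, ENNReal.ofReal (f ω) ∂μ).toReal := by
    rw [mgf, integral_eq_lintegral_of_nonneg_ae (Filter.Eventually.of_forall hfnn)
      hfmeas.aestronglyMeasurable]
  rw [this]
  calc (∫⁻ ω, ENNReal.ofReal (f ω) ∂μ).toReal
      ≤ (ENNReal.ofReal (1 + c / (a - 1))).toReal :=
        ENNReal.toReal_mono ENNReal.ofReal_ne_top hL
    _ = 1 + c / (a - 1) := ENNReal.toReal_ofReal
        (by have : (0:ℝ) ≤ c / (a - 1) := div_nonneg hc (by linarith); linarith)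

theorem stmt_19 {Ω : Type*} [MeasurableSpace Ω] (μ : Measure Ω) [IsProbabilityMeasure μ]
    (n : ℕ) (hn : 3 ≤ n) (Y : Fin n × Fin n → Ω → ℝ)
    (hmeas : ∀ p, Measurable (Y p))
    (hindep : iIndepFun Y μ)
    (hexp : ∀ p, ∀ s : ℝ, 0 ≤ s → μ {ω | s ≤ Y p ω} = ENNReal.ofReal (Real.exp (-s)))
    (lam : ℝ) (hlam : 0 < lam) :
    μ {ω | (n : ℝ) * Real.log n + (n : ℝ) * (Real.log (Real.log n) / lam)
        ≤ ⨆ σ : Equiv.Perm (Fin n), ∑ i, Y (i, σ i) ω}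
      ≤ ENNReal.ofReal
        (Real.exp ((1 / (Real.log n - 1) - Real.log (Real.log n) / (lam * Real.log n)) * n)) := by
  have hn0 : (0:ℝ) < n := by positivity
  set a : ℝ := Real.log n with ha_def
  have ha1 : 1 < a := by
    have h3 : Real.log 3 ≤ a := by
      apply Real.log_le_log (by norm_num)
      exact_mod_cast hn
    have : 1 < Real.log 3 := by
      rw [Real.lt_log_iff_exp_lt (by norm_num)]
      calc Real.exp 1 < 2.7182818286 := Real.exp_one_lt_d9
        _ < 3 := by norm_num
    linarith
  have ha0 : (0:ℝ) < a := by linarith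
  -- the positive-part variables
  set V : Fin n × Fin n → Ω → ℝ := fun p ω => max (Y p ω - a) 0 with hV_def
  have hVmeas : ∀ p, Measurable (V p) :=
    fun p => ((hmeas p).sub measurable_const).max measurable_const
  have hVnn : ∀ p ω, 0 ≤ V p ω := fun p ω => le_max_right _ _
  have hVindep : iIndepFun V μ :=
    hindep.comp (fun _ x => max (x - a) 0)
      (fun _ => (measurable_id.sub measurable_const).max measurable_const)
  have hexp_na : Real.exp (-a) = (n:ℝ)⁻¹ := by
    rw [Real.exp_neg, Real.exp_log hn0]
  have htail : ∀ p, ∀ x : ℝ, 0 < x →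
      μ {ω | x ≤ V p ω} ≤ ENNReal.ofReal ((n:ℝ)⁻¹ * Real.exp (-x)) := by
    intro p x hx
    have hset : {ω | x ≤ V p ω} = {ω | a + x ≤ Y p ω} := by
      ext ω
      simp only [Set.mem_setOf_eq, hV_def, le_max_iff]
      constructor
      · rintro (h | h)
        · linarith
        · linarith
      · intro h; left; linarith
    rw [hset, hexp p (a + x) (by linarith)]
    apply le_of_eq
    congr 1
    rw [neg_add, Real.exp_add, hexp_na]
  -- mgf bounds
  have hmgf := fun p => mgf_aux μ (V p) (hVmeas p) (hVnn p) a ((n:ℝ)⁻¹) ha1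
    (by positivity) (htail p)
  have hint : ∀ p, Integrable (fun ω => Real.exp (a⁻¹ * V p ω)) μ := fun p => (hmgf p).1
  have hmgf_le : ∀ p, mgf (V p) μ a⁻¹ ≤ Real.exp ((n:ℝ)⁻¹ / (a - 1)) := by
    intro p
    refine (hmgf p).2.trans ?_
    have := Real.add_one_le_exp ((n:ℝ)⁻¹ / (a - 1))
    linarith
  -- Chernoff for the sum
  set S : Ω → ℝ := ∑ p : Fin n × Fin n, V p with hS_def
  have hS_int : Integrable (fun ω => Real.exp (a⁻¹ * S ω)) μ :=
    hVindep.integrable_exp_mul_sum hVmeas (fun p _ => hint p)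
  set ε : ℝ := (n:ℝ) * (Real.log a / lam) with hε_def
  have chern := measure_ge_le_exp_mul_mgf (μ := μ) (X := S) ε (by positivity) hS_int
  have hmgf_sum : mgf S μ a⁻¹ = ∏ p : Fin n × Fin n, mgf (V p) μ a⁻¹ :=
    hVindep.mgf_sum hVmeas Finset.univ
  have hprod : (∏ p : Fin n × Fin n, mgf (V p) μ a⁻¹)
      ≤ Real.exp ((n:ℝ) / (a - 1)) := by
    calc (∏ p : Fin n × Fin n, mgf (V p) μ a⁻¹)
        ≤ ∏ _p : Fin n × Fin n, Real.exp ((n:ℝ)⁻¹ / (a - 1)) :=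
          Finset.prod_le_prod (fun p _ => mgf_nonneg) (fun p _ => hmgf_le p)
      _ = Real.exp ((n:ℝ)⁻¹ / (a - 1)) ^ (n * n) := by
          rw [Finset.prod_const, Finset.card_univ, Fintype.card_prod, Fintype.card_fin]
      _ = Real.exp ((n * n : ℕ) * ((n:ℝ)⁻¹ / (a - 1))) := by
          rw [← Real.exp_nat_mul]
      _ = Real.exp ((n:ℝ) / (a - 1)) := by
          congr 1
          push_cast
          rw [div_eq_mul_inv, div_eq_mul_inv,
            show (n:ℝ) * (n:ℝ) * ((n:ℝ)⁻¹ * (a - 1)⁻¹)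
              = ((n:ℝ) * (n:ℝ)⁻¹) * ((n:ℝ) * (a - 1)⁻¹) by ring,
            mul_inv_cancel₀ hn0.ne', one_mul]
  have hchern2 : (μ {ω | ε ≤ S ω}).toReal
      ≤ Real.exp ((1 / (a - 1) - Real.log a / (lam * a)) * n) := by
    refine chern.trans ?_
    rw [hmgf_sum]
    calc Real.exp (-a⁻¹ * ε) * (∏ p : Fin n × Fin n, mgf (V p) μ a⁻¹)
        ≤ Real.exp (-a⁻¹ * ε) * Real.exp ((n:ℝ) / (a - 1)) := by
          exact mul_le_mul_of_nonneg_left hprod (Real.exp_pos _).le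
      _ = Real.exp (-a⁻¹ * ε + (n:ℝ) / (a - 1)) := (Real.exp_add _ _).symm
      _ = Real.exp ((1 / (a - 1) - Real.log a / (lam * a)) * n) := by
          congr 1
          rw [hε_def]
          field_simp
          ring
  -- pathwise bound: event inclusion
  have hsub : {ω | (n : ℝ) * Real.log n + (n : ℝ) * (Real.log (Real.log n) / lam)
        ≤ ⨆ σ : Equiv.Perm (Fin n), ∑ i, Y (i, σ i) ω} ⊆ {ω | ε ≤ S ω} := by
    intro ω hω
    simp only [Set.mem_setOf_eq] at hω ⊢
    have hsup : (⨆ σ : Equiv.Perm (Fin n), ∑ i, Y (i, σ i) ω) ≤ (n:ℝ) * a + S ω := by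
      refine ciSup_le fun σ => ?_
      have h1 : ∑ i, Y (i, σ i) ω ≤ ∑ i, (a + V (i, σ i) ω) := by
        refine Finset.sum_le_sum fun i _ => ?_
        have : Y (i, σ i) ω - a ≤ V (i, σ i) ω := le_max_left _ _
        linarith
      have h2 : ∑ i, (a + V (i, σ i) ω) = (n:ℝ) * a + ∑ i, V (i, σ i) ω := by
        rw [Finset.sum_add_distrib, Finset.sum_const, Finset.card_univ, Fintype.card_fin,
          nsmul_eq_mul]
      have h3 : ∑ i, V (i, σ i) ω ≤ S ω := by
        have hinj : ∀ x ∈ Finset.univ, ∀ y ∈ Finset.univ,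
            (fun i : Fin n => (i, σ i)) x = (fun i : Fin n => (i, σ i)) y → x = y := by
          intro x _ y _ h
          exact congrArg Prod.fst h
        have heq : ∑ i, V (i, σ i) ω
            = ∑ p ∈ Finset.univ.image (fun i : Fin n => (i, σ i)), V p ω := by
          rw [Finset.sum_image hinj]
        rw [heq, hS_def]
        have : (∑ p : Fin n × Fin n, V p) ω = ∑ p : Fin n × Fin n, V p ω := by
          simp
        rw [this]
        exact Finset.sum_le_sum_of_subset_of_nonneg (Finset.subset_univ _)
          (fun p _ _ => hVnn p ω)
      linarith
    have : (n:ℝ) * a + (n:ℝ) * (Real.log a / lam) ≤ (n:ℝ) * a + S ω := le_trans hω hsup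
    rw [hε_def]
    linarith
  calc μ {ω | (n : ℝ) * Real.log n + (n : ℝ) * (Real.log (Real.log n) / lam)
        ≤ ⨆ σ : Equiv.Perm (Fin n), ∑ i, Y (i, σ i) ω}
      ≤ μ {ω | ε ≤ S ω} := measure_mono hsub
    _ = ENNReal.ofReal ((μ {ω | ε ≤ S ω}).toReal) :=
        (ENNReal.ofReal_toReal (measure_ne_top μ _)).symm
    _ ≤ ENNReal.ofReal
        (Real.exp ((1 / (Real.log n - 1) - Real.log (Real.log n) / (lam * Real.log n)) * n)) :=
        ENNReal.ofReal_le_ofReal hchern2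
end
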